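/- For φ ∈ [0,π/2], the operator cos(φ)·(R⊗1) + i·sin(φ)·(R^{−1}⊗1)·S on ℂ⁴⊗ℓ²(ℤ²) is unitary. -/

import Mathlib

open Complex

noncomputable section

/-- `ℂ⁴ ⊗ ℓ²(ℤ²)`; the coin index `{±1,±2}` is encoded as `Fin 2 × Bool`. -/
abbrev H4 := lp (fun _ : (Fin 2 × Bool) × (ℤ × ℤ) => ℂ) 2

def e4 (τ : Fin 2 × Bool) (j : ℤ × ℤ) : H4 := lp.single 2 (τ, j) 1

def rho (τ : Fin 2 × Bool) : Fin 2 × Bool := if τ.1 = 0 then (1, τ.2) else (0, !τ.2)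

def rhoInv (τ : Fin 2 × Bool) : Fin 2 × Bool := if τ.1 = 1 then (0, τ.2) else (1, !τ.2)

def step4 (τ : Fin 2 × Bool) (m : ℤ × ℤ) : ℤ × ℤ :=
  if τ.1 = 0 then (m.1 + (if τ.2 then 1 else -1), m.2)
  else (m.1, m.2 + (if τ.2 then 1 else -1))

/-!
On the standard basis the operator sends `e(τ, j)` to
`cos φ • e(ρτ, j) + i sin φ • e(ρ⁻¹τ, j + τ̂)`.
Both index maps `(τ, j) ↦ (ρτ, j)` and `(τ, j) ↦ (ρ⁻¹τ, j + τ̂)` are bijections, and the first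
sends `(τ, j)` where the second sends `(σ, m)` exactly when the same holds with the roles swapped
(this forces `σ = ρ²τ = -τ`, and then the two shifts cancel). Hence the images `v` of the basis
vectors are orthonormal, the cross terms carrying `cos φ · i sin φ + conj (i sin φ) · cos φ = 0`,
and every basis vector is recovered as `cos φ • v(k) - i sin φ • v(l)`. So the operator maps a
Hilbert basis onto a Hilbert basis, i.e. it is unitary.
-/

open Submodule

section HilbertBasis

variable {ι 𝕜 E F : Type*} [RCLike 𝕜] [NormedAddCommGroup E] [InnerProductSpace 𝕜 E]
  [NormedAddCommGroup F] [InnerProductSpace 𝕜 F] [CompleteSpace F]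

theorem HilbertBasis.exists_linearIsometryEquiv_eq (b : HilbertBasis ι 𝕜 E) (T : E →L[𝕜] F)
    (hT : Orthonormal 𝕜 (T ∘ b)) (hsp : ⊤ ≤ (span 𝕜 (Set.range (T ∘ b))).topologicalClosure) :
    ∃ W : E ≃ₗᵢ[𝕜] F, ∀ x, W x = T x := by
  classical
  let W := b.repr.trans (HilbertBasis.mk hT hsp).repr.symm
  have hWb : ∀ i, W (b i) = T (b i) := fun i => by
    simp [W, b.repr_self, HilbertBasis.repr_symm_single]
  refine ⟨W, fun x => ?_⟩
  have hdense : Dense (span 𝕜 (Set.range b) : Set E) := by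
    simp [Submodule.dense_iff_topologicalClosure_eq_top]
  have := ContinuousLinearMap.ext_on (f := (W.toContinuousLinearEquiv : E →L[𝕜] F)) (g := T)
    hdense (by rintro _ ⟨i, rfl⟩; exact hWb i)
  exact congr($this x)

theorem HilbertBasis.ofRepr_refl_apply [DecidableEq ι] (i : ι) :
    HilbertBasis.ofRepr (LinearIsometryEquiv.refl 𝕜 (lp (fun _ : ι => 𝕜) 2)) i =
      lp.single 2 i 1 := by
  rw [← HilbertBasis.repr_symm_single]; rfl

end HilbertBasis

section SmulAddSmul

variable {ι κ R M : Type*} [CommSemiring R] [StarRing R] [AddCommMonoid M] [Module R M]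
  {f g : κ → ι} {a b : R}

theorem span_range_le_span_range_smul_add_smul (e : ι → M) (hf : f.Surjective)
    (hg : g.Surjective)
    (hfg : ∀ k l, f k = g l → g k = f l) (hnorm : star a * a + star b * b = 1)
    (hcross : star a * b + star b * a = 0) :
    span R (Set.range e) ≤ span R (Set.range fun k => a • e (f k) + b • e (g k)) := by
  rw [span_le]
  rintro _ ⟨i, rfl⟩
  obtain ⟨k, rfl⟩ := hf i
  obtain ⟨l, hl⟩ := hg (f k)
  have hgk : g k = f l := hfg k l hl.symm
  have : e (f k) = star a • (a • e (f k) + b • e (g k)) + star b • (a • e (f l) + b • e (g l)) := by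
    rw [← hgk, hl]
    calc e (f k) = (star a * a + star b * b) • e (f k) + (star a * b + star b * a) • e (g k) := by
          rw [hnorm, hcross, one_smul, zero_smul, add_zero]
      _ = _ := by module
  rw [this]
  exact add_mem (smul_mem _ _ (subset_span ⟨k, rfl⟩)) (smul_mem _ _ (subset_span ⟨l, rfl⟩))

end SmulAddSmul

theorem Orthonormal.smul_add_smul {ι κ 𝕜 E : Type*} [RCLike 𝕜] [NormedAddCommGroup E]
    [InnerProductSpace 𝕜 E] {e : ι → E} (he : Orthonormal 𝕜 e) {f g : κ → ι} {a b : 𝕜}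
    (hf : f.Injective) (hg : g.Injective) (hfg : ∀ k l, f k = g l ↔ g k = f l)
    (hnorm : star a * a + star b * b = 1) (hcross : star a * b + star b * a = 0) :
    Orthonormal 𝕜 (fun k => a • e (f k) + b • e (g k)) := by
  classical
  rw [orthonormal_iff_ite] at he ⊢
  intro k l
  simp only [inner_add_left, inner_add_right, inner_smul_left, inner_smul_right, he,
    hf.eq_iff, hg.eq_iff, hfg k l, starRingEnd_apply]
  calc _ = (if k = l then 1 else 0) * (star a * a + star b * b)
        + (if g k = f l then 1 else 0) * (star a * b + star b * a) := by ring
    _ = _ := by rw [hnorm, hcross]; ring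

theorem step4_eq_add (τ : Fin 2 × Bool) (m : ℤ × ℤ) : step4 τ m = m + step4 τ 0 := by
  rcases τ with ⟨t, b⟩
  fin_cases t <;> cases b <;> simp [step4, Prod.ext_iff]

theorem rho_bijective : rho.Bijective := by decide

theorem rhoInv_bijective : rhoInv.Bijective := by decide

def rhoInvStep (k : (Fin 2 × Bool) × (ℤ × ℤ)) : (Fin 2 × Bool) × (ℤ × ℤ) :=
  (rhoInv k.1, step4 k.1 k.2)

theorem rhoInvStep_bijective : rhoInvStep.Bijective := by
  constructor
  · rintro ⟨τ, j⟩ ⟨σ, m⟩ h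
    simp only [rhoInvStep, Prod.mk.injEq] at h
    obtain ⟨hτσ, hjm⟩ := h
    obtain rfl := rhoInv_bijective.1 hτσ
    rw [step4_eq_add, step4_eq_add τ m] at hjm
    rw [add_right_cancel hjm]
  · rintro ⟨σ, m⟩
    obtain ⟨τ, rfl⟩ := rhoInv_bijective.2 σ
    exact ⟨(τ, m - step4 τ 0), by simp [rhoInvStep, step4_eq_add τ (m - _)]⟩

theorem rho_eq_rhoInv_iff (τ σ : Fin 2 × Bool) : rho τ = rhoInv σ ↔ rhoInv τ = rho σ := by
  revert τ σ; decide

-- `ρτ = ρ⁻¹σ` means `σ = ρ²τ`, the opposite direction `-τ`.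
theorem step4_zero_of_rho_eq_rhoInv {τ σ : Fin 2 × Bool} (h : rho τ = rhoInv σ) :
    step4 σ 0 = -step4 τ 0 := by
  revert τ σ; decide

theorem prodMap_rho_eq_rhoInvStep_iff (k l : (Fin 2 × Bool) × (ℤ × ℤ)) :
    Prod.map rho id k = rhoInvStep l ↔ rhoInvStep k = Prod.map rho id l := by
  rcases k with ⟨τ, j⟩
  rcases l with ⟨σ, m⟩
  simp only [rhoInvStep, Prod.map_apply, id, Prod.mk.injEq]
  rw [step4_eq_add σ m, step4_eq_add τ j]
  constructor
  · rintro ⟨h, rfl⟩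
    refine ⟨(rho_eq_rhoInv_iff τ σ).1 h, ?_⟩
    rw [step4_zero_of_rho_eq_rhoInv h]
    abel
  · rintro ⟨h, rfl⟩
    have h' := (rho_eq_rhoInv_iff τ σ).2 h
    refine ⟨h', ?_⟩
    rw [step4_zero_of_rho_eq_rhoInv h']
    abel

theorem cc_free_part_unitary_general (φ : ℝ)
    (RI : H4 →L[ℂ] H4) (hRI : ∀ τ j, RI (e4 τ j) = e4 (rho τ) j)
    (RIinv : H4 →L[ℂ] H4) (hRIinv : ∀ τ j, RIinv (e4 τ j) = e4 (rhoInv τ) j)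
    (S : H4 →L[ℂ] H4) (hS : ∀ τ j, S (e4 τ j) = e4 τ (step4 τ j)) :
    ∃ W : H4 ≃ₗᵢ[ℂ] H4, ∀ x : H4,
      W x = (Real.cos φ : ℂ) • RI x + (Complex.I * Real.sin φ) • RIinv (S x) := by
  have hcs : (Real.cos φ : ℂ) ^ 2 + (Real.sin φ : ℂ) ^ 2 = 1 := mod_cast Real.cos_sq_add_sin_sq φ
  set c : ℂ := (Real.cos φ : ℂ)
  set s : ℂ := (Real.sin φ : ℂ)
  let b : HilbertBasis _ ℂ H4 := HilbertBasis.ofRepr (LinearIsometryEquiv.refl ℂ H4)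
  have hb : ∀ k, b k = e4 k.1 k.2 := HilbertBasis.ofRepr_refl_apply
  let T : H4 →L[ℂ] H4 := c • RI + (I * s) • RIinv.comp S
  have hTb : ⇑T ∘ b = fun k => c • b (Prod.map rho id k) + (I * s) • b (rhoInvStep k) := by
    funext k
    simp [T, hb, hRI, hRIinv, hS, rhoInvStep]
  have hc : star c = c := conj_ofReal _
  have hs : star s = s := conj_ofReal _
  have hnorm : star c * c + star (I * s) * (I * s) = 1 := by
    rw [star_mul', hc, hs, star_def, conj_I]
    linear_combination hcs - s ^ 2 * I_sq
  have hcross : star c * (I * s) + star (I * s) * c = 0 := by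
    rw [star_mul', hc, hs, star_def, conj_I]
    ring
  have hf : (Prod.map rho (id : ℤ × ℤ → ℤ × ℤ)).Bijective :=
    rho_bijective.prodMap Function.bijective_id
  obtain ⟨W, hW⟩ := b.exists_linearIsometryEquiv_eq T
    (hTb ▸ b.orthonormal.smul_add_smul hf.1 rhoInvStep_bijective.1 prodMap_rho_eq_rhoInvStep_iff
      hnorm hcross)
    (by
      rw [hTb, ← b.dense_span]
      exact topologicalClosure_mono (span_range_le_span_range_smul_add_smul _ hf.2
        rhoInvStep_bijective.2 (fun k l => (prodMap_rho_eq_rhoInvStep_iff k l).1) hnorm hcross))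
  exact ⟨W, hW⟩

/-- For `φ ∈ [0, π/2]` the operator `cos φ (R⊗1) + i sin φ (R⁻¹⊗1) S` on
`ℂ⁴ ⊗ ℓ²(ℤ²)` is unitary. -/
theorem cc_free_part_unitary (φ : ℝ) (hφ : φ ∈ Set.Icc 0 (Real.pi / 2))
    (RI : H4 →L[ℂ] H4) (hRI : ∀ τ j, RI (e4 τ j) = e4 (rho τ) j)
    (RIinv : H4 →L[ℂ] H4) (hRIinv : ∀ τ j, RIinv (e4 τ j) = e4 (rhoInv τ) j)
    (S : H4 →L[ℂ] H4) (hS : ∀ τ j, S (e4 τ j) = e4 τ (step4 τ j)) :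
    ∃ W : H4 ≃ₗᵢ[ℂ] H4, ∀ x : H4,
      W x = (Real.cos φ : ℂ) • RI x + (Complex.I * Real.sin φ) • RIinv (S x) :=
  cc_free_part_unitary_general φ RI hRI RIinv hRIinv S hS
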